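/- Let q = (q(k))_{k ∈ ℤ} be a square-summable sequence of complex numbers, let N ≥ 5 be an integer and y ∈ ℝ with |y| ≥ N⁸, and set λ = N² + N + iy. Then ψ_N(y) ≤ N² · ( ‖q‖²/N + 16 · E_{√N}(q)² ) · b_N(y) + ( ‖q‖²/√|y| + 16 · E_{|y|^{1/4}}(q)² ) · a_N(y). -/

import Mathlib

/-- The point `λ = N² + N + iy`. -/
noncomputable def lam (N : ℕ) (y : ℝ) : ℂ :=
  (((N : ℝ) ^ 2 + N : ℝ) : ℂ) + (y : ℝ) * Complex.I

/-- `ψ_N(y) = ∑_{j,m ∈ ℤ} (j−m)² |q(j−m)|² / (|λ−j²|·|λ−m²|)`. -/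
noncomputable def psi (q : ℤ → ℂ) (N : ℕ) (y : ℝ) : ℝ :=
  ∑' p : ℤ × ℤ,
    ((p.1 : ℝ) - p.2) ^ 2 * ‖q (p.1 - p.2)‖ ^ 2 /
      (‖lam N y - (p.1 : ℂ) ^ 2‖ * ‖lam N y - (p.2 : ℂ) ^ 2‖)

/-- `a_N(y) = ∑_{k ∈ ℤ} 1/|λ−k²|`. -/
noncomputable def aN (N : ℕ) (y : ℝ) : ℝ :=
  ∑' k : ℤ, 1 / ‖lam N y - (k : ℂ) ^ 2‖

/-- `b_N(y) = ∑_{k ∈ ℤ} 1/|λ−k²|²`. -/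
noncomputable def bN (N : ℕ) (y : ℝ) : ℝ :=
  ∑' k : ℤ, 1 / ‖lam N y - (k : ℂ) ^ 2‖ ^ 2

/-- `‖q‖ = (∑_{k ∈ ℤ} |q(k)|²)^{1/2}`. -/
noncomputable def l2norm (q : ℤ → ℂ) : ℝ :=
  Real.sqrt (∑' k : ℤ, ‖q k‖ ^ 2)

/-- The tail `E_M(q) = (∑_{|k| ≥ M} |q(k)|²)^{1/2}`. -/
noncomputable def tailE (q : ℤ → ℂ) (M : ℝ) : ℝ :=
  Real.sqrt (∑' k : ℤ, if M ≤ |(k : ℝ)| then ‖q k‖ ^ 2 else 0)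

/-
Writing `k = j - m`, `ψ_N(y) = ∑_k k² |q(k)|² S(k)` where `S(k) = ∑_m f(k + m) f(m)` is the
autocorrelation of `f(j) = 1/|λ - j²|`. Since `|λ - j²| ≥ |y|`, `S(k) ≤ a_N(y)/|y|`, so
`k² S(k) ≤ a_N(y)/√|y|` when `|k| < |y|^{1/4}`. When `|k| ≥ |y|^{1/4}`, then
`k² ≥ √|y| ≥ N⁴ ≥ 8(N² + N)`, and in every term one of `m`, `k + m` has absolute value at least
`|k|/2`, so `f ≤ 8/k²` there and `S(k) ≤ 16 a_N(y)/k²`. Summing over `k` bounds `ψ_N(y)` by the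
`a_N(y)` term alone.
-/

open Filter

lemma Summable.ite_zero {ι : Type*} {w : ι → ℝ} (hw : Summable w) (P : ι → Prop)
    [DecidablePred P] : Summable fun i => if P i then w i else 0 :=
  (hw.indicator {i | P i}).congr fun i => by simp [Set.indicator_apply]

lemma tsum_prod_le_of_nonneg {α β : Type*} {F : α × β → ℝ} {g : α → ℝ} (hF : 0 ≤ F)
    (hslice : ∀ a, Summable fun b => F (a, b)) (hle : ∀ a, ∑' b, F (a, b) ≤ g a)
    (hg : Summable g) : ∑' p, F p ≤ ∑' a, g a := by
  have houter : Summable fun a => ∑' b, F (a, b) :=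
    hg.of_nonneg_of_le (fun a => tsum_nonneg fun b => hF _) hle
  rw [((summable_prod_of_nonneg hF).2 ⟨hslice, houter⟩).tsum_prod' hslice]
  exact houter.tsum_le_tsum hle hg

noncomputable def autocorr {G : Type*} [AddGroup G] (f : G → ℝ) (k : G) : ℝ :=
  ∑' m, f (k + m) * f m

section Autocorr

variable {G : Type*} [AddGroup G] {f : G → ℝ}

lemma summable_shift_mul_of_le {B : ℝ} (hf0 : 0 ≤ f) (hfB : ∀ j, f j ≤ B) (hf : Summable f)
    (k : G) : Summable fun m => f (k + m) * f m :=
  (hf.mul_left B).of_nonneg_of_le (fun m => mul_nonneg (hf0 _) (hf0 m))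
    fun m => mul_le_mul_of_nonneg_right (hfB _) (hf0 m)

lemma autocorr_nonneg (hf0 : 0 ≤ f) (k : G) : 0 ≤ autocorr f k :=
  tsum_nonneg fun m => mul_nonneg (hf0 _) (hf0 m)

lemma autocorr_le_mul_tsum {B : ℝ} (hf0 : 0 ≤ f) (hfB : ∀ j, f j ≤ B) (hf : Summable f)
    (k : G) : autocorr f k ≤ B * ∑' j, f j := by
  rw [autocorr, ← tsum_mul_left]
  exact (summable_shift_mul_of_le hf0 hfB hf k).tsum_le_tsum
    (fun m => mul_le_mul_of_nonneg_right (hfB _) (hf0 m)) (hf.mul_left B)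

end Autocorr

lemma autocorr_le_of_le_of_sq_le {f : ℤ → ℝ} {ε : ℝ} (hf0 : 0 ≤ f) (hf : Summable f) (k : ℤ)
    (hfar : ∀ j, k ^ 2 ≤ 4 * j ^ 2 → f j ≤ ε) : autocorr f k ≤ 2 * ε * ∑' j, f j := by
  have hshift : Summable fun m => f (k + m) := (Equiv.addLeft k).summable_iff.2 hf
  -- `k = (k + m) - m`, so one of `k + m` and `m` has at least half the size of `k`.
  have hpt : ∀ m, f (k + m) * f m ≤ ε * (f (k + m) + f m) := by
    intro m
    rcases le_or_gt (k ^ 2) (4 * m ^ 2) with hm | hm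
    · have h := hfar m hm
      nlinarith [mul_le_mul_of_nonneg_left h (hf0 (k + m)), mul_nonneg (hf0 m) ((hf0 m).trans h)]
    · have h := hfar (k + m) (by nlinarith [sq_nonneg (2 * m + k)])
      nlinarith [mul_le_mul_of_nonneg_right h (hf0 m), mul_nonneg (hf0 (k + m)) ((hf0 _).trans h)]
  have hmaj : Summable fun m => ε * (f (k + m) + f m) := (hshift.add hf).mul_left ε
  calc autocorr f k ≤ ∑' m, ε * (f (k + m) + f m) :=
        (hmaj.of_nonneg_of_le (fun m => mul_nonneg (hf0 _) (hf0 m)) hpt).tsum_le_tsum hpt hmaj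
    _ = 2 * ε * ∑' j, f j := by
        have hshift_tsum : ∑' m, f (k + m) = ∑' j, f j := (Equiv.addLeft k).tsum_eq f
        rw [tsum_mul_left, hshift.tsum_add hf, hshift_tsum]
        ring

lemma summable_inv_of_sq_sub_le {A : ℤ → ℝ} {c : ℝ} (hA0 : ∀ j, 0 < A j)
    (hAc : ∀ j : ℤ, (j : ℝ) ^ 2 - c ≤ A j) : Summable fun j => (A j)⁻¹ := by
  have hsq : Tendsto (fun j : ℤ => (j : ℝ) ^ 2) cofinite atTop := by
    simpa [Function.comp_def, Real.norm_eq_abs, sq_abs] using (tendsto_pow_atTop two_ne_zero).comp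
      (tendsto_norm_cocompact_atTop.comp Int.tendsto_coe_cofinite)
  refine .of_norm_bounded_eventually ((Real.summable_one_div_int_pow.2 one_lt_two).mul_left 2) ?_
  filter_upwards [hsq.eventually_ge_atTop (2 * |c| + 1)] with j hj
  have hAj : (j : ℝ) ^ 2 / 2 ≤ A j := by linarith [hAc j, le_abs_self c, abs_nonneg c]
  rw [Real.norm_of_nonneg (inv_nonneg.2 (hA0 j).le), mul_one_div, ← inv_div]
  exact inv_anti₀ (by linarith [abs_nonneg c]) hAj

lemma rpow_one_div_four_sq {x : ℝ} (hx : 0 ≤ x) : (x ^ ((1 : ℝ) / 4)) ^ 2 = √x := by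
  rw [← Real.rpow_natCast, ← Real.rpow_mul hx, Real.sqrt_eq_rpow]
  norm_num

lemma sq_mul_autocorr_inv_le {A : ℤ → ℝ} {δ c : ℝ} (hδ : 0 < δ) (hAδ : ∀ j, δ ≤ A j)
    (hAc : ∀ j : ℤ, (j : ℝ) ^ 2 - c ≤ A j) (hc : 8 * c ≤ √δ) (k : ℤ) :
    (k : ℝ) ^ 2 * autocorr (fun j => (A j)⁻¹) k ≤
      (if δ ^ ((1 : ℝ) / 4) ≤ |(k : ℝ)| then 16 else (√δ)⁻¹) * ∑' j, (A j)⁻¹ := by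
  have hA0 : ∀ j, 0 < A j := fun j => hδ.trans_le (hAδ j)
  have hf0 : 0 ≤ fun j => (A j)⁻¹ := fun j => inv_nonneg.2 (hA0 j).le
  have hf : Summable fun j => (A j)⁻¹ := summable_inv_of_sq_sub_le hA0 hAc
  have hquart := rpow_one_div_four_sq hδ.le
  split_ifs with hk
  · have hk2 : √δ ≤ (k : ℝ) ^ 2 := by
      rw [← hquart, ← sq_abs (k : ℝ)]
      exact pow_le_pow_left₀ (by positivity) hk 2
    have hk0 : 0 < (k : ℝ) ^ 2 := (Real.sqrt_pos.2 hδ).trans_le hk2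
    have hfar : ∀ j : ℤ, k ^ 2 ≤ 4 * j ^ 2 → (A j)⁻¹ ≤ 8 / (k : ℝ) ^ 2 := by
      intro j hj
      have hj' : (k : ℝ) ^ 2 ≤ 4 * (j : ℝ) ^ 2 := by exact_mod_cast hj
      rw [← inv_div]
      exact inv_anti₀ (by positivity) (by linarith [hAc j])
    calc (k : ℝ) ^ 2 * autocorr (fun j => (A j)⁻¹) k
        ≤ (k : ℝ) ^ 2 * (2 * (8 / (k : ℝ) ^ 2) * ∑' j, (A j)⁻¹) :=
          mul_le_mul_of_nonneg_left (autocorr_le_of_le_of_sq_le hf0 hf k hfar) (sq_nonneg _)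
      _ = 16 * ∑' j, (A j)⁻¹ := by
          linear_combination (2 * ∑' j, (A j)⁻¹) * mul_div_cancel₀ (8 : ℝ) hk0.ne'
  · have hk2 : (k : ℝ) ^ 2 ≤ √δ := by
      rw [← hquart, ← sq_abs (k : ℝ)]
      exact pow_le_pow_left₀ (abs_nonneg _) (not_le.1 hk).le 2
    calc (k : ℝ) ^ 2 * autocorr (fun j => (A j)⁻¹) k ≤ √δ * (δ⁻¹ * ∑' j, (A j)⁻¹) :=
          mul_le_mul hk2 (autocorr_le_mul_tsum hf0 (fun j => inv_anti₀ hδ (hAδ j)) hf k)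
            (autocorr_nonneg hf0 k) (Real.sqrt_nonneg δ)
      _ = (√δ)⁻¹ * ∑' j, (A j)⁻¹ := by rw [← mul_assoc, ← div_eq_mul_inv, Real.sqrt_div_self]

lemma tsum_pairs_sq_mul_inv_le {A : ℤ → ℝ} {δ c : ℝ} (hδ : 0 < δ) (hAδ : ∀ j, δ ≤ A j)
    (hAc : ∀ j : ℤ, (j : ℝ) ^ 2 - c ≤ A j) (hc : 8 * c ≤ √δ) {w : ℤ → ℝ} (hw0 : 0 ≤ w)
    (hw : Summable w) :
    ∑' p : ℤ × ℤ, (p.1 : ℝ) ^ 2 * w p.1 * ((A (p.1 + p.2))⁻¹ * (A p.2)⁻¹) ≤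
      ∑' k, (w k / √δ + 16 * (if δ ^ ((1 : ℝ) / 4) ≤ |(k : ℝ)| then w k else 0)) *
        ∑' j, (A j)⁻¹ := by
  have hA0 : ∀ j, 0 < A j := fun j => hδ.trans_le (hAδ j)
  have hf0 : 0 ≤ fun j => (A j)⁻¹ := fun j => inv_nonneg.2 (hA0 j).le
  have hf : Summable fun j => (A j)⁻¹ := summable_inv_of_sq_sub_le hA0 hAc
  have ha : 0 ≤ ∑' j, (A j)⁻¹ := tsum_nonneg hf0
  refine tsum_prod_le_of_nonneg
    (fun p => mul_nonneg (mul_nonneg (sq_nonneg _) (hw0 _)) (mul_nonneg (hf0 _) (hf0 _)))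
    (fun k => (summable_shift_mul_of_le hf0 (fun j => inv_anti₀ hδ (hAδ j)) hf k).mul_left
      ((k : ℝ) ^ 2 * w k))
    (fun k => ?_) (((hw.div_const _).add ((hw.ite_zero _).mul_left 16)).mul_right _)
  calc ∑' m, (k : ℝ) ^ 2 * w k * ((A (k + m))⁻¹ * (A m)⁻¹)
      = w k * ((k : ℝ) ^ 2 * autocorr (fun j => (A j)⁻¹) k) := by
        rw [tsum_mul_left, autocorr]
        ring
    _ ≤ w k * ((if δ ^ ((1 : ℝ) / 4) ≤ |(k : ℝ)| then 16 else (√δ)⁻¹) * ∑' j, (A j)⁻¹) :=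
        mul_le_mul_of_nonneg_left (sq_mul_autocorr_inv_le hδ hAδ hAc hc k) (hw0 k)
    _ ≤ _ := by
        split_ifs
        · have h := mul_nonneg (div_nonneg (hw0 k) (Real.sqrt_nonneg δ)) ha
          linarith
        · exact le_of_eq (by ring)

def shear : ℤ × ℤ ≃ ℤ × ℤ where
  toFun p := (p.1 + p.2, p.2)
  invFun p := (p.1 - p.2, p.2)
  left_inv p := by simp
  right_inv p := by simp

lemma lam_sub_sq_re (N : ℕ) (y : ℝ) (j : ℤ) :
    (lam N y - (j : ℂ) ^ 2).re = (N : ℝ) ^ 2 + N - (j : ℝ) ^ 2 := by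
  simp [lam, sq]

lemma lam_sub_sq_im (N : ℕ) (y : ℝ) (j : ℤ) : (lam N y - (j : ℂ) ^ 2).im = y := by
  simp [lam, sq]

lemma abs_le_norm_lam_sub_sq (N : ℕ) (y : ℝ) (j : ℤ) : |y| ≤ ‖lam N y - (j : ℂ) ^ 2‖ := by
  have h := Complex.abs_im_le_norm (lam N y - (j : ℂ) ^ 2)
  rwa [lam_sub_sq_im] at h

lemma sq_sub_le_norm_lam_sub_sq (N : ℕ) (y : ℝ) (j : ℤ) :
    (j : ℝ) ^ 2 - ((N : ℝ) ^ 2 + N) ≤ ‖lam N y - (j : ℂ) ^ 2‖ := by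
  have h := Complex.abs_re_le_norm (lam N y - (j : ℂ) ^ 2)
  rw [lam_sub_sq_re] at h
  linarith [neg_abs_le ((N : ℝ) ^ 2 + N - (j : ℝ) ^ 2)]

lemma psi_eq_tsum_shear (q : ℤ → ℂ) (N : ℕ) (y : ℝ) :
    psi q N y = ∑' p : ℤ × ℤ, (p.1 : ℝ) ^ 2 * ‖q p.1‖ ^ 2 *
      (‖lam N y - ((p.1 + p.2 : ℤ) : ℂ) ^ 2‖⁻¹ * ‖lam N y - (p.2 : ℂ) ^ 2‖⁻¹) := by
  rw [psi, ← shear.tsum_eq]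
  congr 1
  ext p
  simp only [shear, Equiv.coe_fn_mk, add_sub_cancel_right, div_eq_mul_inv, mul_inv]
  push_cast
  ring

lemma tsum_div_add_tail (q : ℤ → ℂ) (hq : Summable fun k : ℤ => ‖q k‖ ^ 2) (s M : ℝ) :
    ∑' k, (‖q k‖ ^ 2 / s + 16 * (if M ≤ |(k : ℝ)| then ‖q k‖ ^ 2 else 0)) =
      l2norm q ^ 2 / s + 16 * tailE q M ^ 2 := by
  have htail0 : ∀ k : ℤ, 0 ≤ if M ≤ |(k : ℝ)| then ‖q k‖ ^ 2 else 0 := fun k => by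
    split_ifs <;> positivity
  rw [(hq.div_const s).tsum_add ((hq.ite_zero _).mul_left 16), tsum_div_const, tsum_mul_left,
    l2norm, tailE, Real.sq_sqrt (tsum_nonneg fun k => sq_nonneg _),
    Real.sq_sqrt (tsum_nonneg htail0)]

theorem psi_le (q : ℤ → ℂ) (hq : Summable fun k : ℤ => ‖q k‖ ^ 2) {N : ℕ} (hN : 5 ≤ N) {y : ℝ}
    (hy : (N : ℝ) ^ 8 ≤ |y|) :
    psi q N y ≤ (l2norm q ^ 2 / √|y| + 16 * tailE q (|y| ^ ((1 : ℝ) / 4)) ^ 2) * aN N y := by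
  have hN' : (5 : ℝ) ≤ N := by exact_mod_cast hN
  have hy0 : 0 < |y| := lt_of_lt_of_le (by positivity) hy
  have hc : 8 * ((N : ℝ) ^ 2 + N) ≤ √|y| := by
    have hN4 : (N : ℝ) ^ 4 ≤ √|y| := Real.le_sqrt_of_sq_le (by linarith)
    have hN2 : 25 ≤ (N : ℝ) ^ 2 := by nlinarith
    nlinarith [mul_le_mul_of_nonneg_left hN2 (sq_nonneg (N : ℝ))]
  have haN : aN N y = ∑' j : ℤ, ‖lam N y - (j : ℂ) ^ 2‖⁻¹ := by simp only [aN, one_div]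
  rw [psi_eq_tsum_shear, ← tsum_div_add_tail q hq, haN, ← tsum_mul_right]
  exact tsum_pairs_sq_mul_inv_le hy0 (abs_le_norm_lam_sub_sq N y) (sq_sub_le_norm_lam_sub_sq N y)
    hc (fun k => sq_nonneg _) hq

theorem stmt12 (q : ℤ → ℂ) (hq : Summable fun k : ℤ => ‖q k‖ ^ 2)
    (N : ℕ) (hN : 5 ≤ N) (y : ℝ) (hy : (N : ℝ) ^ 8 ≤ |y|) :
    psi q N y ≤
      (N : ℝ) ^ 2 * (l2norm q ^ 2 / N + 16 * tailE q (Real.sqrt N) ^ 2) * bN N y +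
        (l2norm q ^ 2 / Real.sqrt |y| + 16 * tailE q (|y| ^ ((1 : ℝ) / 4)) ^ 2) * aN N y := by
  have hb : 0 ≤ bN N y := tsum_nonneg fun k => by positivity
  exact (psi_le q hq hN hy).trans (le_add_of_nonneg_left (by positivity))
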